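/- Let μ ∈ ℝ and let f : [0,∞) → ℝ be continuously differentiable with f and f' bounded and f(x) → 0 as x → ∞. Define u¹(t,x) = ∫₀^∞ f(y) G(t;x,y) dy for t > 0 and x ≥ 0. Then the one-sided spatial derivative ∂_x u¹(t,0) exists and equals 0 for every t > 0. -/

import Mathlib

open MeasureTheory Set Filter

/-- Standard normal density. -/
noncomputable def phi (x : ℝ) : ℝ := (1 / Real.sqrt (2 * Real.pi)) * Real.exp (-x ^ 2 / 2)

/-- Standard normal tail function. -/
noncomputable def Psi (x : ℝ) : ℝ := ∫ y in Set.Ioi x, phi y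

/-- The kernel `G(t;x,y)` with drift parameter `μ`. -/
noncomputable def Gker (μ t x y : ℝ) : ℝ :=
  (1 / Real.sqrt t) *
      (Real.exp (2 * μ * y) * phi ((x + y + μ * t) / Real.sqrt t) +
        phi ((x - y + μ * t) / Real.sqrt t)) -
    2 * μ * Real.exp (2 * μ * y) * Psi ((x + y + μ * t) / Real.sqrt t)

/-- The kernel `H(t;x,y)` with parameters `μ, ν`. -/
noncomputable def Hker (μ ν t x y : ℝ) : ℝ :=
  if ν = μ then
    2 * Real.exp (2 * μ * y) *
      ((1 + μ * (x + y + μ * t)) * Psi ((x + y + μ * t) / Real.sqrt t) -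
        μ * Real.sqrt t * phi ((x + y + μ * t) / Real.sqrt t))
  else
    Real.exp (2 * μ * y) / (ν - μ) *
      ((2 * ν - μ) * Real.exp (2 * (ν - μ) * (x + y + ν * t)) *
          Psi ((x + y + (2 * ν - μ) * t) / Real.sqrt t) -
        μ * Psi ((x + y + μ * t) / Real.sqrt t))

/-- The density `g(t;b,s)` of `(B_t^{-μ}, S_t^{-μ})`, vanishing off `{b ≤ s, 0 ≤ s}`. -/
noncomputable def gker (μ t b s : ℝ) : ℝ :=
  if b ≤ s ∧ 0 ≤ s then
    Real.sqrt (2 / Real.pi) * t ^ (-(3 : ℝ) / 2) * (2 * s - b) *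
      Real.exp (-(2 * s - b) ^ 2 / (2 * t) - μ * (b + μ * t / 2))
  else 0

/-- Spatial derivative (one-sided at `x = 0`). -/
noncomputable def ux (u : ℝ → ℝ → ℝ) (t x : ℝ) : ℝ :=
  derivWithin (fun z => u t z) (Set.Ici 0) x

/-- Second spatial derivative (one-sided at `x = 0`). -/
noncomputable def uxx (u : ℝ → ℝ → ℝ) (t x : ℝ) : ℝ :=
  derivWithin (fun z => ux u t z) (Set.Ici 0) x

/-- Time derivative. -/
noncomputable def ut (u : ℝ → ℝ → ℝ) (t x : ℝ) : ℝ :=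
  deriv (fun s => u s x) t

/-- `u` is a solution of the Stroock–Williams problem with parameters `μ, ν`
and initial data `f`. -/
def IsSWSolution (μ ν : ℝ) (f : ℝ → ℝ) (u : ℝ → ℝ → ℝ) : Prop :=
  ContDiffOn ℝ (⊤ : ℕ∞) (fun p : ℝ × ℝ => u p.1 p.2) (Set.Ioi 0 ×ˢ Set.Ici 0) ∧
  (∀ T > (0 : ℝ),
    ContinuousOn (fun p : ℝ × ℝ => u p.1 p.2) (Set.Icc 0 T ×ˢ Set.Ici 0) ∧
    ContinuousOn (fun p : ℝ × ℝ => ux u p.1 p.2) (Set.Icc 0 T ×ˢ Set.Ici 0) ∧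
    ∃ C : ℝ, ∀ p ∈ Set.Icc (0 : ℝ) T ×ˢ Set.Ici (0 : ℝ),
      |u p.1 p.2| ≤ C ∧ |ux u p.1 p.2| ≤ C) ∧
  (∀ t > (0 : ℝ), Filter.Tendsto (fun x => u t x) Filter.atTop (nhds 0)) ∧
  (∀ t > (0 : ℝ), ∀ x ≥ (0 : ℝ), ut u t x = μ * ux u t x + (1 / 2) * uxx u t x) ∧
  (∀ x ≥ (0 : ℝ), u 0 x = f x) ∧
  (∀ t > (0 : ℝ), ut u t 0 = ν * ux u t 0)

/-- `f` is admissible initial data: `C¹` on `[0,∞)` with `f` and `f'` bounded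
and `f(x) → 0` as `x → ∞`. -/
def IsInitialData (f : ℝ → ℝ) : Prop :=
  ContDiffOn ℝ 1 f (Set.Ici 0) ∧
  (∃ C : ℝ, ∀ x ∈ Set.Ici (0 : ℝ), |f x| ≤ C ∧ |derivWithin f (Set.Ici 0) x| ≤ C) ∧
  Filter.Tendsto f Filter.atTop (nhds 0)

noncomputable def Gx (μ t x y : ℝ) : ℝ :=
  Real.exp (2 * μ * y) * (-((x + y + μ * t) / Real.sqrt t) * phi ((x + y + μ * t) / Real.sqrt t)) / t
  + -((x - y + μ * t) / Real.sqrt t) * phi ((x - y + μ * t) / Real.sqrt t) / t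
  + 2 * μ * Real.exp (2 * μ * y) * phi ((x + y + μ * t) / Real.sqrt t) / Real.sqrt t

lemma phi_eq (x : ℝ) : phi x = (1 / Real.sqrt (2 * Real.pi)) * Real.exp (-(1/2 : ℝ) * x ^ 2) := by
  rw [phi, show -x^2/2 = -(1/2:ℝ)*x^2 by ring]

lemma continuous_phi : Continuous phi := by
  unfold phi; fun_prop

lemma integrable_phi : Integrable phi := by
  have : phi = fun x => (1 / Real.sqrt (2 * Real.pi)) * Real.exp (-(1/2:ℝ) * x ^ 2) :=
    funext phi_eq
  rw [this]
  exact (integrable_exp_neg_mul_sq (by norm_num)).const_mul _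

lemma phi_nonneg (x : ℝ) : 0 ≤ phi x := by
  unfold phi
  positivity

lemma phi_le (x : ℝ) : phi x ≤ Real.exp (-x ^ 2 / 2) := by
  unfold phi
  have h1 : (1:ℝ) ≤ Real.sqrt (2 * Real.pi) := by
    rw [show (1:ℝ) = Real.sqrt 1 by simp]
    apply Real.sqrt_le_sqrt
    nlinarith [Real.pi_gt_three]
  have h2 : 1 / Real.sqrt (2 * Real.pi) ≤ 1 := by
    rw [div_le_one (by positivity)]; exact h1
  exact mul_le_of_le_one_left (le_of_lt (Real.exp_pos _)) h2

lemma hasDerivAt_phi (x : ℝ) : HasDerivAt phi (-x * phi x) x := by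
  have h1 : HasDerivAt (fun x : ℝ => -x ^ 2 / 2) (-x) x := by
    have h0 := ((hasDerivAt_pow 2 x).neg).div_const 2
    exact h0.congr_deriv (by push_cast; ring)
  have h2 := (h1.exp).const_mul (1 / Real.sqrt (2 * Real.pi))
  have heq : 1 / Real.sqrt (2*Real.pi) * (Real.exp (-x^2/2) * -x) = -x * phi x := by
    rw [phi]; ring
  rw [heq] at h2
  exact h2

lemma Psi_eq (x : ℝ) : Psi x = Psi 0 - ∫ u in (0:ℝ)..x, phi u := by
  rcases le_total 0 x with h | h
  · have : Psi 0 = (∫ u in Set.Ioc 0 x, phi u) + Psi x := by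
      rw [Psi, Psi, ← setIntegral_union (Set.Ioc_disjoint_Ioi le_rfl)
        measurableSet_Ioi integrable_phi.integrableOn integrable_phi.integrableOn,
        Set.Ioc_union_Ioi_eq_Ioi h]
    rw [intervalIntegral.integral_of_le h, this]
    simp [MeasureTheory.integral_Ioc_eq_integral_Ioo]
  · have : Psi x = (∫ u in Set.Ioc x 0, phi u) + Psi 0 := by
      rw [Psi, Psi, ← setIntegral_union (Set.Ioc_disjoint_Ioi le_rfl)
        measurableSet_Ioi integrable_phi.integrableOn integrable_phi.integrableOn,
        Set.Ioc_union_Ioi_eq_Ioi h]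
    rw [intervalIntegral.integral_of_ge h, this]; simp [MeasureTheory.integral_Ioc_eq_integral_Ioo]; ring

lemma hasDerivAt_Psi (x : ℝ) : HasDerivAt Psi (-phi x) x := by
  have h : HasDerivAt (fun u => ∫ s in (0:ℝ)..u, phi s) (phi x) x :=
    intervalIntegral.integral_hasDerivAt_right integrable_phi.intervalIntegrable
      continuous_phi.aestronglyMeasurable.stronglyMeasurableAtFilter
      continuous_phi.continuousAt
  have := (hasDerivAt_const x (Psi 0)).sub h
  have := this.congr_of_eventuallyEq (Filter.Eventually.of_forall fun u => Psi_eq u)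
  simpa using this

lemma phi_le' (x : ℝ) : phi x ≤ Real.exp (-x ^ 2 / 4) :=
  (phi_le x).trans (Real.exp_le_exp.2 (by nlinarith [sq_nonneg x]))

lemma abs_mul_phi_le (z : ℝ) : |z| * phi z ≤ Real.exp (-z ^ 2 / 4) := by
  have h1 : |z| ≤ Real.exp (z ^ 2 / 4) := by
    have h2 := Real.add_one_le_exp (z ^ 2 / 4)
    nlinarith [sq_nonneg (|z| / 2 - 1), sq_abs z]
  calc |z| * phi z ≤ Real.exp (z ^ 2 / 4) * Real.exp (-z ^ 2 / 2) :=
        mul_le_mul h1 (phi_le z) (phi_nonneg z) (le_of_lt (Real.exp_pos _))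
    _ = Real.exp (-z ^ 2 / 4) := by rw [← Real.exp_add]; ring_nf

lemma integral_phi : ∫ x, phi x = 1 := by
  have : phi = fun x => (1 / Real.sqrt (2 * Real.pi)) * Real.exp (-(1/2 : ℝ) * x ^ 2) := by
    funext x; rw [phi, show -x^2/2 = -(1/2:ℝ)*x^2 by ring]
  rw [this, integral_const_mul, integral_gaussian,
    show Real.pi / (1/2 : ℝ) = 2 * Real.pi by ring, one_div,
    inv_mul_cancel₀ (ne_of_gt (Real.sqrt_pos.2 (by positivity)))]

lemma Psi_nonneg (x : ℝ) : 0 ≤ Psi x :=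
  setIntegral_nonneg measurableSet_Ioi fun y _ => phi_nonneg y

lemma Psi_le_one (x : ℝ) : Psi x ≤ 1 := by
  rw [← integral_phi]
  exact setIntegral_le_integral integrable_phi (ae_of_all _ phi_nonneg)

lemma sqrt_four_pi : Real.sqrt (4 * Real.pi) = Real.sqrt 2 * Real.sqrt (2 * Real.pi) := by
  rw [← Real.sqrt_mul (by norm_num : (0:ℝ) ≤ 2)]
  norm_num [show (2 : ℝ) * (2 * Real.pi) = 4 * Real.pi by ring]

lemma Psi_le_max (x : ℝ) : Psi x ≤ Real.sqrt 2 * Real.exp (-(max x 0) ^ 2 / 4) := by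
  have h2 : (1:ℝ) ≤ Real.sqrt 2 := by
    rw [show (1:ℝ) = Real.sqrt 1 by simp]
    exact Real.sqrt_le_sqrt (by norm_num)
  rcases le_total x 0 with h | h
  · rw [max_eq_right h]
    simpa using (Psi_le_one x).trans h2
  · rw [max_eq_left h]
    have key : Psi x ≤ ∫ u in Set.Ioi x,
        (1 / Real.sqrt (2 * Real.pi)) * Real.exp (-(1/4 : ℝ) * u ^ 2) * Real.exp (-x ^ 2 / 4) := by
      apply setIntegral_mono_on integrable_phi.integrableOn
        ((((integrable_exp_neg_mul_sq (by norm_num : (0:ℝ) < 1/4)).const_mul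
          _).mul_const _).integrableOn)
        measurableSet_Ioi
      intro u hu
      have hu' : x ≤ u := le_of_lt hu
      rw [phi, mul_assoc, ← Real.exp_add]
      have : -u ^ 2 / 2 ≤ -(1/4 : ℝ) * u ^ 2 + -x ^ 2 / 4 := by nlinarith
      exact mul_le_mul_of_nonneg_left (Real.exp_le_exp.2 this) (by positivity)
    have key2 : (∫ u in Set.Ioi x,
        (1 / Real.sqrt (2 * Real.pi)) * Real.exp (-(1/4 : ℝ) * u ^ 2) * Real.exp (-x ^ 2 / 4))
        ≤ ∫ u, (1 / Real.sqrt (2 * Real.pi)) * Real.exp (-(1/4 : ℝ) * u ^ 2) * Real.exp (-x ^ 2 / 4) := by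
      apply setIntegral_le_integral
        (((integrable_exp_neg_mul_sq (by norm_num : (0:ℝ) < 1/4)).const_mul _).mul_const _)
      exact ae_of_all _ fun u => by positivity
    have key3 : (∫ u, (1 / Real.sqrt (2 * Real.pi)) * Real.exp (-(1/4 : ℝ) * u ^ 2) * Real.exp (-x ^ 2 / 4))
        = Real.sqrt 2 * Real.exp (-x ^ 2 / 4) := by
      have heq : (fun u => (1 / Real.sqrt (2 * Real.pi)) * Real.exp (-(1/4 : ℝ) * u ^ 2) * Real.exp (-x ^ 2 / 4))
          = fun u => ((1 / Real.sqrt (2 * Real.pi)) * Real.exp (-x ^ 2 / 4)) * Real.exp (-(1/4 : ℝ) * u ^ 2) := by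
        funext u; ring
      rw [heq, integral_const_mul, integral_gaussian,
        show Real.pi / (1/4 : ℝ) = 4 * Real.pi by ring, sqrt_four_pi]
      have hne : Real.sqrt (2 * Real.pi) ≠ 0 := ne_of_gt (Real.sqrt_pos.2 (by positivity))
      field_simp
    linarith

lemma sq_key {y c s : ℝ} (hy : 0 ≤ y) (hc : 0 ≤ c) (h : |s - y| ≤ c) :
    (y - c) ^ 2 ≤ (max s 0) ^ 2 + c ^ 2 := by
  rcases le_total y c with h1 | h1
  · nlinarith [sq_nonneg (max s 0)]
  · have hs : y - c ≤ s := by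
      have := abs_le.1 h
      linarith [this.1]
    have h2 : y - c ≤ max s 0 := hs.trans (le_max_left _ _)
    nlinarith [le_max_right s 0]

lemma exp_max_bound {t y c z : ℝ} (ht : 0 < t) (hy : 0 ≤ y) (hc : 0 ≤ c)
    (h : |Real.sqrt t * z - y| ≤ c) :
    Real.exp (-(max z 0) ^ 2 / 4) ≤ Real.exp (c ^ 2 / (4 * t)) * Real.exp (-(y - c) ^ 2 / (4 * t)) := by
  rw [← Real.exp_add, Real.exp_le_exp]
  have hst : 0 < Real.sqrt t := Real.sqrt_pos.2 ht
  have hkey := sq_key hy hc h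
  have hmax : max (Real.sqrt t * z) 0 = Real.sqrt t * max z 0 := by
    rcases le_total z 0 with hz | hz
    · rw [max_eq_right hz, max_eq_right (by nlinarith), mul_zero]
    · rw [max_eq_left hz, max_eq_left (by positivity)]
  rw [hmax, mul_pow, Real.sq_sqrt ht.le] at hkey
  have h4t : (0:ℝ) < 4 * t := by linarith
  have h1 : -(t * (max z 0) ^ 2 + c ^ 2) / (4 * t) ≤ -(y - c) ^ 2 / (4 * t) :=
    (div_le_div_iff_of_pos_right h4t).2 (by linarith)
  have h2 : -(t * (max z 0) ^ 2 + c ^ 2) / (4 * t) = -(max z 0) ^ 2 / 4 - c ^ 2 / (4 * t) := by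
    field_simp; ring
  linarith

lemma exp_sq_bound {t y c z : ℝ} (ht : 0 < t) (hy : 0 ≤ y) (hc : 0 ≤ c)
    (h : |Real.sqrt t * z - y| ≤ c) :
    Real.exp (-z ^ 2 / 4) ≤ Real.exp (c ^ 2 / (4 * t)) * Real.exp (-(y - c) ^ 2 / (4 * t)) := by
  refine le_trans (Real.exp_le_exp.2 ?_) (exp_max_bound ht hy hc h)
  have : (max z 0) ^ 2 ≤ z ^ 2 := by
    rcases le_total z 0 with hz | hz
    · rw [max_eq_right hz]; simpa using sq_nonneg z
    · rw [max_eq_left hz]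
  linarith

lemma integrable_dom {t B c : ℝ} (ht : 0 < t) :
    Integrable (fun y : ℝ => Real.exp (B * y) * Real.exp (-(y - c) ^ 2 / (4 * t))) := by
  have h4t : (0:ℝ) < 1 / (4 * t) := by positivity
  have hbase : Integrable (fun y : ℝ => Real.exp (-(1 / (4 * t)) * y ^ 2)) :=
    integrable_exp_neg_mul_sq h4t
  have hshift : Integrable (fun y : ℝ => Real.exp (-(1 / (4 * t)) * (y - (c + 2 * t * B)) ^ 2)) :=
    hbase.comp_sub_right (c + 2 * t * B)
  have heq : (fun y : ℝ => Real.exp (B * y) * Real.exp (-(y - c) ^ 2 / (4 * t)))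
      = fun y => Real.exp (B * c + t * B ^ 2) *
          Real.exp (-(1 / (4 * t)) * (y - (c + 2 * t * B)) ^ 2) := by
    funext y
    rw [← Real.exp_add, ← Real.exp_add]
    congr 1
    field_simp
    ring
  rw [heq]
  exact hshift.const_mul _

lemma hasDerivAt_Gker (μ t y : ℝ) (ht : 0 < t) (x : ℝ) :
    HasDerivAt (fun x => Gker μ t x y) (Gx μ t x y) x := by
  have hst : (0:ℝ) < Real.sqrt t := Real.sqrt_pos.2 ht
  have hA : HasDerivAt (fun x : ℝ => (x + y + μ * t) / Real.sqrt t) (1 / Real.sqrt t) x := by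
    simpa using (((hasDerivAt_id x).add_const y).add_const (μ * t)).div_const (Real.sqrt t)
  have hB : HasDerivAt (fun x : ℝ => (x - y + μ * t) / Real.sqrt t) (1 / Real.sqrt t) x := by
    simpa using (((hasDerivAt_id x).sub_const y).add_const (μ * t)).div_const (Real.sqrt t)
  have hphiA := (hasDerivAt_phi ((x + y + μ * t) / Real.sqrt t)).comp x hA
  have hphiB := (hasDerivAt_phi ((x - y + μ * t) / Real.sqrt t)).comp x hB
  have hpsiA := (hasDerivAt_Psi ((x + y + μ * t) / Real.sqrt t)).comp x hA
  have h1 := ((hphiA.const_mul (Real.exp (2 * μ * y))).add hphiB).const_mul (1 / Real.sqrt t)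
  have h2 := hpsiA.const_mul (2 * μ * Real.exp (2 * μ * y))
  have h := h1.sub h2
  refine h.congr_deriv ?_
  unfold Gx
  set s := Real.sqrt t with hs_def
  have hss : s * s = t := Real.mul_self_sqrt ht.le
  rw [← hss]
  have hs0 : s ≠ 0 := ne_of_gt hst
  field_simp
  ring

lemma exp_phi_id (μ t y : ℝ) (ht : 0 < t) :
    Real.exp (2 * μ * y) * phi ((y + μ * t) / Real.sqrt t) = phi ((μ * t - y) / Real.sqrt t) := by
  have hs : Real.sqrt t ^ 2 = t := Real.sq_sqrt ht.le
  have harg : 2 * μ * y + -((y + μ * t) / Real.sqrt t) ^ 2 / 2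
      = -((μ * t - y) / Real.sqrt t) ^ 2 / 2 := by
    rw [div_pow, div_pow, hs]
    field_simp
    ring
  rw [phi, phi, show Real.exp (2*μ*y) * (1 / Real.sqrt (2*Real.pi) * Real.exp (-((y + μ*t) / Real.sqrt t) ^ 2 / 2))
      = 1 / Real.sqrt (2*Real.pi) * Real.exp (2*μ*y + -((y + μ*t) / Real.sqrt t) ^ 2 / 2) by
    rw [Real.exp_add]; ring]
  rw [harg]

lemma Gx_zero (μ t y : ℝ) (ht : 0 < t) : Gx μ t 0 y = 0 := by
  have hst : (0:ℝ) < Real.sqrt t := Real.sqrt_pos.2 ht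
  unfold Gx
  rw [show (0:ℝ) + y + μ * t = y + μ * t by ring, show (0:ℝ) - y + μ * t = μ * t - y by ring,
    ← exp_phi_id μ t y ht]
  set s := Real.sqrt t with hs_def
  have hss : s * s = t := Real.mul_self_sqrt ht.le
  rw [← hss]
  have hs0 : s ≠ 0 := ne_of_gt hst
  field_simp
  ring

lemma Gx_bound (μ t x y : ℝ) (ht : 0 < t) (hx : |x| ≤ 1) (hy : 0 ≤ y) :
    |Gx μ t x y| ≤ ((2 / t + 2 * |μ| / Real.sqrt t) * Real.exp ((1 + |μ| * t) ^ 2 / (4 * t))) *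
      (Real.exp (2 * |μ| * y) * Real.exp (-(y - (1 + |μ| * t)) ^ 2 / (4 * t))) := by
  have hst : (0:ℝ) < Real.sqrt t := Real.sqrt_pos.2 ht
  set c : ℝ := 1 + |μ| * t with hc_def
  have hc : 0 ≤ c := by positivity
  set A : ℝ := (x + y + μ * t) / Real.sqrt t with hA_def
  set B : ℝ := (x - y + μ * t) / Real.sqrt t with hB_def
  have hstA : Real.sqrt t * A = x + y + μ * t := by
    rw [hA_def, mul_div_cancel₀ _ (ne_of_gt hst)]
  have hstB : Real.sqrt t * B = x - y + μ * t := by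
    rw [hB_def, mul_div_cancel₀ _ (ne_of_gt hst)]
  have hxc : |x + μ * t| ≤ c := by
    calc |x + μ * t| ≤ |x| + |μ * t| := abs_add_le _ _
      _ ≤ 1 + |μ| * t := by rw [abs_mul, abs_of_pos ht]; linarith
  have hA' : |Real.sqrt t * A - y| ≤ c := by
    rw [hstA, show x + y + μ * t - y = x + μ * t by ring]; exact hxc
  have hB' : |Real.sqrt t * (-B) - y| ≤ c := by
    rw [mul_neg, hstB, show -(x - y + μ * t) - y = -(x + μ * t) by ring, abs_neg]; exact hxc
  set E : ℝ := Real.exp (c ^ 2 / (4 * t)) * Real.exp (-(y - c) ^ 2 / (4 * t)) with hE_def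
  set M : ℝ := Real.exp (2 * |μ| * y) with hM_def
  have hM1 : (1:ℝ) ≤ M := Real.one_le_exp (by positivity)
  have hMe : Real.exp (2 * μ * y) ≤ M := Real.exp_le_exp.2 (by
    have : μ ≤ |μ| := le_abs_self μ
    nlinarith)
  have hE0 : 0 ≤ E := by positivity
  have e1 : |A| * phi A ≤ E := (abs_mul_phi_le A).trans (exp_sq_bound ht hy hc hA')
  have e2 : |B| * phi B ≤ E := by
    have := exp_sq_bound ht hy hc hB'
    rw [neg_pow, show ((-1:ℝ)^2) = 1 by norm_num, one_mul] at this
    exact (abs_mul_phi_le B).trans this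
  have e3 : phi A ≤ E := (phi_le' A).trans (exp_sq_bound ht hy hc hA')
  -- bound each of the three summands
  have hM0 : (0:ℝ) ≤ M := le_trans zero_le_one hM1
  have t1 : |Real.exp (2 * μ * y) * (-A * phi A) / t| ≤ M * E / t := by
    rw [abs_div, abs_of_pos ht, abs_mul, abs_mul, abs_neg, abs_of_pos (Real.exp_pos _),
      abs_of_nonneg (phi_nonneg A)]
    exact (div_le_div_iff_of_pos_right ht).2
      (mul_le_mul hMe e1 (mul_nonneg (abs_nonneg A) (phi_nonneg A)) hM0)
  have t2 : |(-B) * phi B / t| ≤ M * E / t := by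
    rw [abs_div, abs_of_pos ht, abs_mul, abs_neg, abs_of_nonneg (phi_nonneg B)]
    refine (div_le_div_iff_of_pos_right ht).2 (e2.trans ?_)
    nlinarith
  have t3 : |2 * μ * Real.exp (2 * μ * y) * phi A / Real.sqrt t| ≤ 2 * |μ| * M * E / Real.sqrt t := by
    rw [abs_div, abs_of_pos hst, abs_mul, abs_mul, abs_mul, abs_of_pos (Real.exp_pos _),
      abs_of_nonneg (phi_nonneg A), show |(2:ℝ)| = 2 by norm_num]
    refine (div_le_div_iff_of_pos_right hst).2 ?_
    have h := mul_le_mul hMe e3 (phi_nonneg A) hM0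
    nlinarith [abs_nonneg μ]
  have habs : |Gx μ t x y| ≤ |Real.exp (2 * μ * y) * (-A * phi A) / t| + |(-B) * phi B / t|
      + |2 * μ * Real.exp (2 * μ * y) * phi A / Real.sqrt t| := by
    unfold Gx
    rw [← hA_def, ← hB_def]
    exact (abs_add_le _ _).trans (by gcongr; exact abs_add_le _ _)
  have hrhs : ((2 / t + 2 * |μ| / Real.sqrt t) * Real.exp (c ^ 2 / (4 * t))) *
      (M * Real.exp (-(y - c) ^ 2 / (4 * t)))
      = M * E / t + M * E / t + 2 * |μ| * M * E / Real.sqrt t := by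
    rw [hE_def]; field_simp; ring
  rw [hrhs]
  linarith

lemma Gker_zero_bound (μ t y : ℝ) (ht : 0 < t) (hy : 0 ≤ y) :
    |Gker μ t 0 y| ≤ ((2 / Real.sqrt t + 2 * Real.sqrt 2 * |μ|) *
        Real.exp ((1 + |μ| * t) ^ 2 / (4 * t))) *
      (Real.exp (2 * |μ| * y) * Real.exp (-(y - (1 + |μ| * t)) ^ 2 / (4 * t))) := by
  have hst : (0:ℝ) < Real.sqrt t := Real.sqrt_pos.2 ht
  set c : ℝ := 1 + |μ| * t with hc_def
  have hc : 0 ≤ c := by positivity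
  set A : ℝ := (0 + y + μ * t) / Real.sqrt t with hA_def
  set B : ℝ := (0 - y + μ * t) / Real.sqrt t with hB_def
  have hmu : |μ * t| ≤ c := by
    rw [abs_mul, abs_of_pos ht]; nlinarith [abs_nonneg μ]
  have hA' : |Real.sqrt t * A - y| ≤ c := by
    rw [hA_def, mul_div_cancel₀ _ (ne_of_gt hst), show 0 + y + μ * t - y = μ * t by ring]
    exact hmu
  have hB' : |Real.sqrt t * (-B) - y| ≤ c := by
    rw [hB_def, mul_neg, mul_div_cancel₀ _ (ne_of_gt hst),
      show -(0 - y + μ * t) - y = -(μ * t) by ring, abs_neg]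
    exact hmu
  set E : ℝ := Real.exp (c ^ 2 / (4 * t)) * Real.exp (-(y - c) ^ 2 / (4 * t)) with hE_def
  set M : ℝ := Real.exp (2 * |μ| * y) with hM_def
  have hM1 : (1:ℝ) ≤ M := Real.one_le_exp (by positivity)
  have hMe : Real.exp (2 * μ * y) ≤ M := Real.exp_le_exp.2 (by
    have : μ ≤ |μ| := le_abs_self μ
    nlinarith)
  have hE0 : 0 ≤ E := by positivity
  have e3 : phi A ≤ E := (phi_le' A).trans (exp_sq_bound ht hy hc hA')
  have e2 : phi B ≤ E := by
    have := exp_sq_bound ht hy hc hB'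
    rw [neg_pow, show ((-1:ℝ)^2) = 1 by norm_num, one_mul] at this
    exact (phi_le' B).trans this
  have e4 : Psi A ≤ Real.sqrt 2 * E := by
    refine (Psi_le_max A).trans ?_
    have := exp_max_bound ht hy hc hA'
    nlinarith [Real.sqrt_nonneg 2]
  have hM0 : (0:ℝ) ≤ M := le_trans zero_le_one hM1
  have h1 : Real.exp (2 * μ * y) * phi A ≤ M * E :=
    mul_le_mul hMe e3 (phi_nonneg A) hM0
  have h2 : phi B ≤ M * E := by nlinarith
  have t1 : |(1 / Real.sqrt t) * (Real.exp (2 * μ * y) * phi A + phi B)| ≤ (M * E + M * E) / Real.sqrt t := by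
    rw [abs_mul, abs_of_pos (by positivity : (0:ℝ) < 1 / Real.sqrt t), one_div, ← div_eq_inv_mul,
      abs_of_nonneg (add_nonneg (mul_nonneg (Real.exp_pos _).le (phi_nonneg A)) (phi_nonneg B))]
    exact (div_le_div_iff_of_pos_right hst).2 (add_le_add h1 h2)
  have t2 : |2 * μ * Real.exp (2 * μ * y) * Psi A| ≤ 2 * |μ| * M * (Real.sqrt 2 * E) := by
    rw [abs_mul, abs_mul, abs_mul, show |(2:ℝ)| = 2 by norm_num, abs_of_pos (Real.exp_pos _),
      abs_of_nonneg (Psi_nonneg A)]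
    have h := mul_le_mul hMe e4 (Psi_nonneg A) hM0
    nlinarith [abs_nonneg μ]
  have habs : |Gker μ t 0 y| ≤ |(1 / Real.sqrt t) * (Real.exp (2 * μ * y) * phi A + phi B)|
      + |2 * μ * Real.exp (2 * μ * y) * Psi A| := by
    unfold Gker
    rw [← hA_def, ← hB_def]
    exact abs_sub _ _
  have hrhs : ((2 / Real.sqrt t + 2 * Real.sqrt 2 * |μ|) * Real.exp (c ^ 2 / (4 * t))) *
      (M * Real.exp (-(y - c) ^ 2 / (4 * t)))
      = (M * E + M * E) / Real.sqrt t + 2 * |μ| * M * (Real.sqrt 2 * E) := by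
    rw [hE_def]; field_simp; ring
  rw [hrhs]
  linarith

lemma continuous_Psi : Continuous Psi :=
  continuous_iff_continuousAt.2 fun x => (hasDerivAt_Psi x).continuousAt

lemma continuous_Gker_y (μ t x : ℝ) : Continuous (fun y => Gker μ t x y) := by
  unfold Gker
  apply Continuous.sub
  · exact continuous_const.mul
      (((Real.continuous_exp.comp (by fun_prop)).mul (continuous_phi.comp (by fun_prop))).add
        (continuous_phi.comp (by fun_prop)))
  · exact ((continuous_const.mul (Real.continuous_exp.comp (by fun_prop))).mul
      (continuous_Psi.comp (by fun_prop)))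

/-- the one-sided spatial derivative of `u¹` at the boundary
vanishes. -/
theorem u1_boundary_derivative_zero (μ : ℝ) (f : ℝ → ℝ) (hf : IsInitialData f) :
    ∀ t > (0 : ℝ),
      HasDerivWithinAt (fun x => ∫ y in Set.Ioi (0 : ℝ), f y * Gker μ t x y) 0
        (Set.Ici 0) 0 := by
  intro t ht
  obtain ⟨hf1, ⟨C, hC⟩, -⟩ := hf
  have hC0 : 0 ≤ C := (abs_nonneg _).trans (hC 0 (Set.self_mem_Ici)).1
  have hfc : ContinuousOn f (Set.Ioi 0) :=
    (hf1.continuousOn).mono (Set.Ioi_subset_Ici le_rfl)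
  have hfm : AEStronglyMeasurable f (volume.restrict (Set.Ioi (0:ℝ))) :=
    hfc.aestronglyMeasurable measurableSet_Ioi
  set c : ℝ := 1 + |μ| * t with hc_def
  set K1 : ℝ := (2 / t + 2 * |μ| / Real.sqrt t) * Real.exp (c ^ 2 / (4 * t)) with hK1_def
  set K2 : ℝ := (2 / Real.sqrt t + 2 * Real.sqrt 2 * |μ|) * Real.exp (c ^ 2 / (4 * t)) with hK2_def
  set dom : ℝ → ℝ := fun y => Real.exp (2 * |μ| * y) * Real.exp (-(y - c) ^ 2 / (4 * t))
    with hdom_def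
  have hdom_int : Integrable dom := integrable_dom ht
  have hdom_nonneg : ∀ y, 0 ≤ dom y := fun y => by positivity
  -- measurability of F x
  have hF_meas : ∀ᶠ x in nhds (0:ℝ), AEStronglyMeasurable (fun y => f y * Gker μ t x y)
      (volume.restrict (Set.Ioi (0:ℝ))) := by
    refine Filter.Eventually.of_forall fun x => ?_
    exact hfm.mul ((continuous_Gker_y μ t x).aestronglyMeasurable)
  -- integrability of F 0
  have hF_int : Integrable (fun y => f y * Gker μ t 0 y) (volume.restrict (Set.Ioi (0:ℝ))) := by
    refine Integrable.mono' (((hdom_int.const_mul (C * K2)).restrict)) 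
      (hfm.mul ((continuous_Gker_y μ t 0).aestronglyMeasurable)) ?_
    refine (ae_restrict_iff' measurableSet_Ioi).2 (Filter.Eventually.of_forall fun y hy => ?_)
    have hy' : (0:ℝ) ≤ y := le_of_lt hy
    rw [Real.norm_eq_abs, abs_mul]
    calc |f y| * |Gker μ t 0 y| ≤ C * (K2 * dom y) :=
          mul_le_mul (hC y (Set.mem_Ici.2 hy')).1 (Gker_zero_bound μ t y ht hy') (abs_nonneg _) hC0
      _ = C * K2 * dom y := by ring
  -- F' measurability at 0
  have hF'0 : (fun y => f y * Gx μ t 0 y) = fun _ => (0:ℝ) := by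
    funext y; rw [Gx_zero μ t y ht, mul_zero]
  have hF'_meas : AEStronglyMeasurable (fun y => f y * Gx μ t 0 y)
      (volume.restrict (Set.Ioi (0:ℝ))) := by
    rw [hF'0]; exact aestronglyMeasurable_const
  -- bound on F'
  have h_bound : ∀ᵐ y ∂(volume.restrict (Set.Ioi (0:ℝ))), ∀ x ∈ Metric.ball (0:ℝ) 1,
      ‖f y * Gx μ t x y‖ ≤ C * K1 * dom y := by
    refine (ae_restrict_iff' measurableSet_Ioi).2 (Filter.Eventually.of_forall fun y hy x hx => ?_)
    have hy' : (0:ℝ) ≤ y := le_of_lt hy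
    have hx' : |x| ≤ 1 := by
      rw [Metric.mem_ball, Real.dist_eq, sub_zero] at hx
      exact hx.le
    rw [Real.norm_eq_abs, abs_mul]
    calc |f y| * |Gx μ t x y| ≤ C * (K1 * dom y) :=
          mul_le_mul (hC y (Set.mem_Ici.2 hy')).1 (Gx_bound μ t x y ht hx' hy') (abs_nonneg _) hC0
      _ = C * K1 * dom y := by ring
  -- differentiability
  have h_diff : ∀ᵐ y ∂(volume.restrict (Set.Ioi (0:ℝ))), ∀ x ∈ Metric.ball (0:ℝ) 1,
      HasDerivAt (fun x => f y * Gker μ t x y) (f y * Gx μ t x y) x :=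
    Filter.Eventually.of_forall fun y x _ => (hasDerivAt_Gker μ t y ht x).const_mul (f y)
  obtain ⟨-, hd⟩ := hasDerivAt_integral_of_dominated_loc_of_deriv_le (F := fun x y => f y * Gker μ t x y)
    (F' := fun x y => f y * Gx μ t x y) (bound := fun y => C * K1 * dom y)
    (Metric.ball_mem_nhds 0 one_pos) hF_meas hF_int hF'_meas h_bound ((hdom_int.const_mul (C * K1)).restrict) h_diff
  rw [show (∫ y in Set.Ioi (0:ℝ), f y * Gx μ t 0 y) = 0 by rw [hF'0]; simp] at hd
  exact hd.hasDerivWithinAt
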